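/- If ĥ and ĥ_d are unit vectors with ĥ·ĥ_d = cos β and β is differentiable with sin β ≠ 0, and dĥ/dt = −(r a_N/h) θ̂ with ĥ_d constant, then sin β · β̇ = (r a_N/h)(ĥ_d·θ̂); in particular β̇ does not depend on the radial component ĥ_d·r̂. -/
import Mathlib


open scoped RealInnerProductSpace

theorem stmt13 (hhat θhat : ℝ → EuclideanSpace ℝ (Fin 3))
    (hd : EuclideanSpace ℝ (Fin 3)) (hdunit : ‖hd‖ = 1)
    (β : ℝ → ℝ) (β' t rr hh a_N : ℝ) (hrr : 0 < rr) (hhh : 0 < hh)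
    (hhatunit : ∀ s, ‖hhat s‖ = 1)
    (hcos : ∀ s, Real.cos (β s) = ⟪hhat s, hd⟫)
    (hdh : HasDerivAt hhat (-(rr * a_N / hh) • θhat t) t)
    (hdβ : HasDerivAt β β' t)
    (hsin : Real.sin (β t) ≠ 0) :
    Real.sin (β t) * β' = rr * a_N / hh * ⟪hd, θhat t⟫ := by
  have h1 : HasDerivAt (fun s => Real.cos (β s)) (-Real.sin (β t) * β') t := hdβ.cos
  have h2 : HasDerivAt (fun s => ⟪hhat s, hd⟫) ⟪-(rr * a_N / hh) • θhat t, hd⟫ t := by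
    have := (hdh.inner ℝ (hasDerivAt_const t hd))
    simpa using this
  have heq : (fun s => Real.cos (β s)) = fun s => ⟪hhat s, hd⟫ := funext hcos
  rw [heq] at h1
  have := h1.unique h2
  rw [inner_smul_left] at this
  simp only [RCLike.conj_to_real] at this
  rw [show ⟪hd, θhat t⟫ = ⟪θhat t, hd⟫ from real_inner_comm _ _]
  linarith [this]
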